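/- arXiv:1211.5294 — 4 statements merged into one kernel-verified Lean document; each statement's English description precedes it below -/
import Mathlib

section
/- Let P be a partially ordered set admitting binary joins and let f : P → P' be an order-preserving map preserving binary joins. Then U_f : U(P) → U(P') preserves binary meets, i.e., for up-sets Q₁, Q₂ of P, the up-set generated by f(Q₁ ∩ Q₂) equals the intersection of the up-sets generated by f(Q₁) and f(Q₂). -/
/-- The up-set of `P'` generated by the image of an up-set `Q` of `P`:
`U_f(Q) = ⋃_{q ∈ Q} {p' : p' ≥ f q}`. -/
def mapUpper {P P' : Type*} [PartialOrder P] [PartialOrder P'] (f : P →o P')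
    (Q : UpperSet P) : UpperSet P' :=
  ⟨{p' | ∃ q ∈ (Q : Set P), f q ≤ p'}, fun _a _b hab ⟨q, hq, hfq⟩ => ⟨q, hq, hfq.trans hab⟩⟩

/-- If `P` admits binary joins and `f : P → P'` is an order-preserving map preserving
binary joins (i.e. `f (a ⊔ b)` is a least upper bound of `{f a, f b}`), then `U_f`
preserves binary intersections of up-sets: the up-set generated by `f(Q₁ ∩ Q₂)` equals
the intersection of the up-sets generated by `f(Q₁)` and by `f(Q₂)`. -/
theorem stmt3 {P P' : Type*} [SemilatticeSup P] [PartialOrder P'] (f : P →o P')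
    (hf : ∀ a b : P, IsLUB {f a, f b} (f (a ⊔ b)))
    (Q₁ Q₂ : UpperSet P) :
    mapUpper f (Q₁ ⊔ Q₂) = mapUpper f Q₁ ⊔ mapUpper f Q₂ ∧
    (mapUpper f (Q₁ ⊔ Q₂) : Set P') =
      (mapUpper f Q₁ : Set P') ∩ (mapUpper f Q₂ : Set P') := by
  have hset : (mapUpper f (Q₁ ⊔ Q₂) : Set P') =
      (mapUpper f Q₁ : Set P') ∩ (mapUpper f Q₂ : Set P') := by
    ext p'
    constructor
    · rintro ⟨q, hq, hfq⟩
      rw [UpperSet.coe_sup] at hq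
      exact ⟨⟨q, hq.1, hfq⟩, ⟨q, hq.2, hfq⟩⟩
    · rintro ⟨⟨q₁, hq₁, hfq₁⟩, ⟨q₂, hq₂, hfq₂⟩⟩
      refine ⟨q₁ ⊔ q₂, ?_, ?_⟩
      · rw [UpperSet.coe_sup]
        exact ⟨Q₁.upper le_sup_left hq₁, Q₂.upper le_sup_right hq₂⟩
      · exact (hf q₁ q₂).2 (by simp [upperBounds, hfq₁, hfq₂])
  refine ⟨?_, hset⟩
  apply UpperSet.ext
  rw [hset, UpperSet.coe_sup]
end

section
/- Let n ≥ 0 and let Crt^n denote the set of nonempty up-sets of the product poset [n] × [n], ordered by reverse inclusion. Then the cardinality of Crt^n is C(2n+2, n+1) − 1, where C denotes the binomial coefficient. -/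
section Aux

/-- For a strictly monotone map between `Fin` types, values grow at least linearly. -/
lemma strictMono_add_le {a b : ℕ} {f : Fin a → Fin b} (hf : StrictMono f) (i : Fin a) :
    ∀ (d : ℕ) (j : Fin a), (i : ℕ) + d = (j : ℕ) → (f i : ℕ) + d ≤ (f j : ℕ) := by
  intro d
  induction d with
  | zero =>
    intro j hj
    have : i = j := Fin.ext (by omega)
    subst this; omega
  | succ k ih =>
    intro j hj
    have hj1 : (j : ℕ) - 1 < a := by omega
    have h1 := ih ⟨(j : ℕ) - 1, hj1⟩ (by simp; omega)
    have h2 : f ⟨(j : ℕ) - 1, hj1⟩ < f j := hf (by rw [Fin.lt_def]; simp; omega)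
    rw [Fin.lt_def] at h2
    omega

lemma strictMono_le_apply {a b : ℕ} {f : Fin a → Fin b} (hf : StrictMono f) (i : Fin a) :
    (i : ℕ) ≤ (f i : ℕ) := by
  have := strictMono_add_le hf ⟨0, i.pos⟩ (i : ℕ) i (by simp)
  omega

/-- A nonempty upper subset of the chain `Fin (n+1)`: membership is determined by
cardinality. -/
lemma col_mem_iff (n : ℕ) (S : Finset (Fin (n + 1)))
    (hS : ∀ ⦃a b : Fin (n + 1)⦄, a ≤ b → a ∈ S → b ∈ S) (j : Fin (n + 1)) :
    j ∈ S ↔ n + 1 ≤ S.card + (j : ℕ) := by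
  constructor
  · intro hj
    have h1 : Finset.Ici j ⊆ S := fun k hk => hS (Finset.mem_Ici.mp hk) hj
    have h2 := Finset.card_le_card h1
    rw [Fin.card_Ici] at h2
    have := j.isLt
    omega
  · intro h
    by_contra hj
    have h1 : S ⊆ Finset.Ioi j := by
      intro k hk
      rcases le_or_gt k j with hkj | hjk
      · exact absurd (hS hkj hk) hj
      · exact Finset.mem_Ioi.mpr hjk
    have h2 := Finset.card_le_card h1
    rw [Fin.card_Ioi] at h2
    have := j.isLt
    omega

/-- From a monotone map `f : Fin (n+1) → Fin (n+2)`, the upper set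
`{p | n + 1 ≤ f p.1 + p.2}` of `Fin (n+1) × Fin (n+1)`. -/
def phi1 (n : ℕ) (f : Fin (n + 1) →o Fin (n + 2)) :
    UpperSet (Fin (n + 1) × Fin (n + 1)) :=
  ⟨{p | n + 1 ≤ (f p.1 : ℕ) + (p.2 : ℕ)}, by
    intro p q hpq hp
    have h1 : (f p.1 : ℕ) ≤ (f q.1 : ℕ) := f.monotone hpq.1
    have h2 : (p.2 : ℕ) ≤ (q.2 : ℕ) := hpq.2
    simp only [Set.mem_setOf_eq] at hp ⊢
    omega⟩

lemma mem_phi1 (n : ℕ) (f : Fin (n + 1) →o Fin (n + 2)) (p : Fin (n + 1) × Fin (n + 1)) :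
    p ∈ phi1 n f ↔ n + 1 ≤ (f p.1 : ℕ) + (p.2 : ℕ) := Iff.rfl

lemma phi1_bijective (n : ℕ) : Function.Bijective (phi1 n) := by
  constructor
  · have key : ∀ f f' : Fin (n + 1) →o Fin (n + 2), phi1 n f = phi1 n f' →
        ∀ i, (f i : ℕ) ≤ (f' i : ℕ) := by
      intro f f' h i
      by_contra hlt
      push_neg at hlt
      have hfi2 := (f i).isLt
      have hj : n + 1 - (f i : ℕ) < n + 1 := by omega
      have hmem : (i, (⟨n + 1 - (f i : ℕ), hj⟩ : Fin (n + 1))) ∈ phi1 n f := by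
        rw [mem_phi1]; simp; omega
      rw [h, mem_phi1] at hmem
      simp at hmem
      omega
    intro f f' h
    apply OrderHom.ext
    funext i
    exact Fin.ext (le_antisymm (key f f' h i) (key f' f h.symm i))
  · intro Q
    classical
    set c : Fin (n + 1) → ℕ :=
      fun i => (Finset.univ.filter (fun j => (i, j) ∈ Q)).card with hc
    have hcle : ∀ i, c i ≤ n + 1 := by
      intro i
      calc c i ≤ Finset.univ.card := Finset.card_filter_le _ _
        _ = n + 1 := by simp
    have hmono : ∀ i i' : Fin (n + 1), i ≤ i' → c i ≤ c i' := by
      intro i i' hii'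
      apply Finset.card_le_card
      intro j hj
      simp only [Finset.mem_filter, Finset.mem_univ, true_and] at hj ⊢
      exact Q.upper' (Prod.mk_le_mk.mpr ⟨hii', le_refl j⟩) hj
    refine ⟨⟨fun i => ⟨c i, by have := hcle i; omega⟩,
      fun i i' h => Fin.mk_le_mk.mpr (hmono i i' h)⟩, ?_⟩
    apply UpperSet.ext
    ext p
    have hS : ∀ ⦃a b : Fin (n + 1)⦄, a ≤ b →
        a ∈ Finset.univ.filter (fun j => (p.1, j) ∈ Q) →
        b ∈ Finset.univ.filter (fun j => (p.1, j) ∈ Q) := by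
      intro a b hab ha
      simp only [Finset.mem_filter, Finset.mem_univ, true_and] at ha ⊢
      exact Q.upper' (Prod.mk_le_mk.mpr ⟨le_refl p.1, hab⟩) ha
    have hcol := col_mem_iff n _ hS p.2
    simp only [Finset.mem_filter, Finset.mem_univ, true_and] at hcol
    have hp : (p.1, p.2) = p := rfl
    rw [hp] at hcol
    change (n + 1 ≤ c p.1 + (p.2 : ℕ)) ↔ _
    rw [← hcol]
    exact Iff.rfl

/-- The strictly monotone map `i ↦ f i + i` associated to a monotone map. -/
def gmap (n : ℕ) (f : Fin (n + 1) →o Fin (n + 2)) (i : Fin (n + 1)) : Fin (2 * n + 2) :=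
  ⟨(f i : ℕ) + (i : ℕ), by have := (f i).isLt; have := i.isLt; omega⟩

lemma gmap_strictMono (n : ℕ) (f : Fin (n + 1) →o Fin (n + 2)) : StrictMono (gmap n f) := by
  intro i i' h
  have h1 : (f i : ℕ) ≤ (f i' : ℕ) := f.monotone (le_of_lt h)
  have h2 : (i : ℕ) < (i' : ℕ) := h
  rw [Fin.lt_def]
  simp only [gmap]
  omega

/-- From a monotone map, the image finset of `gmap`, of cardinality `n+1`. -/
def phi2 (n : ℕ) (f : Fin (n + 1) →o Fin (n + 2)) :
    {s : Finset (Fin (2 * n + 2)) // s.card = n + 1} :=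
  ⟨Finset.univ.image (gmap n f), by
    rw [Finset.card_image_of_injective _ (gmap_strictMono n f).injective,
      Finset.card_univ, Fintype.card_fin]⟩

lemma phi2_bijective (n : ℕ) : Function.Bijective (phi2 n) := by
  constructor
  · intro f f' h
    set s := (phi2 n f).1 with hs
    have hcard : s.card = n + 1 := (phi2 n f).2
    have h1 : ∀ x, (OrderEmbedding.ofStrictMono _ (gmap_strictMono n f)) x ∈ s :=
      fun x => Finset.mem_image_of_mem _ (Finset.mem_univ x)
    have h1' : ∀ x, (OrderEmbedding.ofStrictMono _ (gmap_strictMono n f')) x ∈ s := by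
      intro x
      have : (phi2 n f').1 = s := by rw [hs, h]
      rw [← this]
      exact Finset.mem_image_of_mem _ (Finset.mem_univ x)
    have e1 := Finset.orderEmbOfFin_unique' hcard h1
    have e2 := Finset.orderEmbOfFin_unique' hcard h1'
    have heq : ∀ i, gmap n f i = gmap n f' i := by
      intro i
      have c1 := DFunLike.congr_fun e1 i
      have c2 := DFunLike.congr_fun e2 i
      simp only [OrderEmbedding.coe_ofStrictMono] at c1 c2
      rw [c1, c2]
    apply OrderHom.ext
    funext i
    have := heq i
    simp only [gmap, Fin.mk.injEq] at this
    exact Fin.ext (by omega)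
  · rintro ⟨s, hscard⟩
    set g := s.orderEmbOfFin hscard with hg
    have hgs : StrictMono g := g.strictMono
    have hle : ∀ i : Fin (n + 1), (i : ℕ) ≤ (g i : ℕ) := fun i => strictMono_le_apply hgs i
    have hbound : ∀ i : Fin (n + 1), (g i : ℕ) ≤ n + 1 + (i : ℕ) := by
      intro i
      have hi := i.isLt
      have h1 := strictMono_add_le hgs i (n - (i : ℕ)) ⟨n, by omega⟩ (by simp; omega)
      have h2 := (g ⟨n, by omega⟩).isLt
      omega
    refine ⟨⟨fun i => ⟨(g i : ℕ) - (i : ℕ), by have := hbound i; omega⟩, ?_⟩, ?_⟩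
    · intro i i' hii'
      have h1 : (i : ℕ) ≤ (i' : ℕ) := hii'
      have h2 := strictMono_add_le hgs i ((i' : ℕ) - (i : ℕ)) i' (by omega)
      rw [Fin.mk_le_mk]
      omega
    · apply Subtype.ext
      show Finset.univ.image _ = s
      have hgm : ∀ i : Fin (n + 1),
          gmap n ⟨fun i => ⟨(g i : ℕ) - (i : ℕ), by have := hbound i; omega⟩, by
            intro i i' hii'
            have h1 : (i : ℕ) ≤ (i' : ℕ) := hii'
            have h2 := strictMono_add_le hgs i ((i' : ℕ) - (i : ℕ)) i' (by omega)
            rw [Fin.mk_le_mk]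
            omega⟩ i = g i := by
        intro i
        apply Fin.ext
        show (g i : ℕ) - (i : ℕ) + (i : ℕ) = (g i : ℕ)
        have := hle i
        omega
      ext x
      simp only [Finset.mem_image, Finset.mem_univ, true_and]
      constructor
      · rintro ⟨i, rfl⟩
        rw [hgm i]
        exact Finset.orderEmbOfFin_mem s hscard i
      · intro hx
        have hr : x ∈ Set.range g := by
          rw [hg, Finset.range_orderEmbOfFin]
          exact hx
        obtain ⟨i, hi⟩ := hr
        exact ⟨i, (hgm i).trans hi⟩

lemma card_subtype_ne {β : Type*} [Fintype β] [DecidableEq β] (b : β) :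
    Fintype.card {x : β // x ≠ b} = Fintype.card β - 1 := by
  have h := Fintype.card_subtype_compl (fun x : β => x = b)
  rw [Fintype.card_subtype_eq] at h
  exact h

end Aux

/-- The number of nonempty up-sets of the product poset `[n] × [n]` (where
`[n] = {0, …, n}`) is `C(2n+2, n+1) − 1`. -/
theorem stmt8 (n : ℕ) :
    Nat.card {Q : UpperSet (Fin (n + 1) × Fin (n + 1)) //
        (Q : Set (Fin (n + 1) × Fin (n + 1))).Nonempty} =
      (2 * n + 2).choose (n + 1) - 1 := by
  classical
  set E : UpperSet (Fin (n + 1) × Fin (n + 1)) ≃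
      {s : Finset (Fin (2 * n + 2)) // s.card = n + 1} :=
    (Equiv.ofBijective _ (phi1_bijective n)).symm.trans
      (Equiv.ofBijective _ (phi2_bijective n)) with hE
  have hne : ∀ Q : UpperSet (Fin (n + 1) × Fin (n + 1)),
      (Q : Set (Fin (n + 1) × Fin (n + 1))).Nonempty ↔ E Q ≠ E ⊤ := by
    intro Q
    rw [ne_eq, Equiv.apply_eq_iff_eq]
    rw [Set.nonempty_iff_ne_empty, ← UpperSet.coe_top]
    constructor
    · intro h hQ
      exact h (by rw [hQ])
    · intro h hQ
      exact h (UpperSet.ext hQ)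
  have hcongr := Nat.card_congr
    (Equiv.subtypeEquiv (p := fun Q : UpperSet (Fin (n + 1) × Fin (n + 1)) =>
      (Q : Set (Fin (n + 1) × Fin (n + 1))).Nonempty)
      (q := fun s => s ≠ E ⊤) E hne)
  rw [hcongr, Nat.card_eq_fintype_card, card_subtype_ne, Fintype.card_finset_len,
    Fintype.card_fin]
end

section
/- Let S be a partially ordered set containing the three-element chain Q = {0 < 1 < 2} as a full subposet, and let R = S − {1}. Assume 0 is the greatest element of {r ∈ R : r ≤ 1} and 2 is the least element of {r ∈ R : r ≥ 1}. Then the inclusion of simplicial sets N(Q) ∪ N(R) ⊆ N(S) is inner anodyne. -/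
open CategoryTheory

/-- The union of the nerves of a family of full subposets, as a subcomplex of the
nerve of a poset `S`: an `n`-simplex belongs to it iff all its vertices lie in some
member of the family. -/
def nerveUnion (S : Type*) [PartialOrder S] (Qs : Set (Set S)) :
    Subfunctor (nerve S) where
  obj _ := {σ | ∃ T ∈ Qs, ∀ i, σ.obj i ∈ T}
  map f := by
    rintro σ ⟨T, hT, h⟩
    exact ⟨T, hT, fun i => h _⟩

/-- The class of inner horn inclusions `Λ[n, i] ⟶ Δ[n]`, `0 < i < n`, up to isomorphism
in the arrow category. -/
def InnerHornInclusions : MorphismProperty SSet := fun _ _ f =>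
  ∃ (n : ℕ) (i : Fin (n + 1)), 0 < (i : ℕ) ∧ (i : ℕ) < n ∧
    Nonempty (Arrow.mk f ≅ Arrow.mk (SSet.horn n i).ι)

/-- The right lifting property against a class of morphisms. -/
def RLP (T : MorphismProperty SSet) : MorphismProperty SSet := fun _ _ p =>
  ∀ ⦃A B : SSet⦄ (i : A ⟶ B), T i → HasLiftingProperty i p

/-- The left lifting property against a class of morphisms. -/
def LLP (T : MorphismProperty SSet) : MorphismProperty SSet := fun _ _ i =>
  ∀ ⦃X Y : SSet⦄ (p : X ⟶ Y), T p → HasLiftingProperty i p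

/-- Inner anodyne maps: the weakly saturated class generated by the inner horn
inclusions, characterized by the left lifting property against all maps having the
right lifting property against the inner horn inclusions. -/
def InnerAnodyne : MorphismProperty SSet := LLP (RLP InnerHornInclusions)

/-!
`N(S)` is obtained from `N(Q) ∪ N(R)` by attaching inner horns along a regular pairing in the
sense of Moss. The nondegenerate simplices of `N(S)` outside `N(Q) ∪ N(R)` are the finite
chains `C` with `x₁ ∈ C ⊄ Q`. The hypotheses make every such chain comparable with its pivot
`p(C)` (`x₀` if `C` has a vertex below `x₀`, `x₂` otherwise), and `p(C)` is neither the least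
nor the greatest element of `C ∪ {p(C)}`. Pairing each `C ∌ p(C)` with `C ∪ {p(C)}`, whose face
opposite `p(C)` is `C`, thus uses only inner horns. If `C ≠ D` are two such chains of the same
size and `C` is a face of `D ∪ {p(D)}`, then `p(C) = x₂` and `p(D) = x₀`; hence `[p = x₀]` is a
rank function and the pairing is regular.
-/

namespace Fin

variable {α : Type*} [Preorder α] {n : ℕ}

lemma exists_strictMono_insertNth {f : Fin n → α} (hf : StrictMono f) {t : α}
    (ht : ∀ i, f i < t ∨ t < f i) : ∃ q : Fin (n + 1), StrictMono (q.insertNth t f) := by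
  classical
  set L := Finset.univ.filter fun i => f i < t
  have hL : L.card < n + 1 := Nat.lt_succ_of_le ((Finset.card_le_univ L).trans (by simp))
  refine ⟨⟨L.card, hL⟩, (strictMono_insertNth_iff _ _ _).2 ⟨hf, fun i hi => ?_, fun i hi => ?_⟩⟩
  · refine (ht i).resolve_right fun hti => ?_
    have : L ⊆ Finset.Iio i := fun j hj => by
      simp only [L, Finset.mem_filter, Finset.mem_univ, true_and] at hj
      simpa using lt_of_not_ge fun hij => (hti.trans_le (hf.monotone hij)).not_gt hj
    have := (Finset.card_le_card this).trans_eq (card_Iio i)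
    simp only [lt_def, val_castSucc] at hi
    omega
  · refine (ht i).resolve_left fun hit => ?_
    have : Finset.Iic i ⊆ L := fun j hj => by
      simp only [Finset.mem_Iic] at hj
      simpa [L] using (hf.monotone hj).trans_lt hit
    have := (card_Iic i).symm.trans_le (Finset.card_le_card this)
    simp only [le_def, val_castSucc] at hi
    omega

lemma castSucc_lt_of_strictMono_insertNth {f : Fin n → α} {q : Fin (n + 1)} {t : α}
    (h : StrictMono (q.insertNth t f)) {i : Fin n} (hi : f i < t) : i.castSucc < q :=
  lt_of_not_ge fun hq => (((strictMono_insertNth_iff _ _ _).1 h).2.2 i hq).not_gt hi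

lemma le_castSucc_of_strictMono_insertNth {f : Fin n → α} {q : Fin (n + 1)} {t : α}
    (h : StrictMono (q.insertNth t f)) {i : Fin n} (hi : t < f i) : q ≤ i.castSucc :=
  le_of_not_gt fun hq => (((strictMono_insertNth_iff _ _ _).1 h).2.1 i hq).not_gt hi

end Fin

section

open Simplicial

namespace PartialOrder

variable {X : Type*} [PartialOrder X]

lemma ncard_range_nerve_obj {n : ℕ} {x : (nerve X) _⦋n⦌} (hx : StrictMono x.obj) :
    (Set.range x.obj).ncard = n + 1 := by
  rw [Set.ncard_range_of_injective hx.injective, Nat.card_eq_fintype_card, Fintype.card_fin]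

lemma nerve_sMk_eq_iff {n m : ℕ} {x : (nerve X) _⦋n⦌} {y : (nerve X) _⦋m⦌}
    (hx : StrictMono x.obj) (hy : StrictMono y.obj) :
    SSet.S.mk x = SSet.S.mk y ↔ Set.range x.obj = Set.range y.obj := by
  constructor
  · intro h
    obtain rfl := SSet.S.dim_eq_of_mk_eq h
    rw [(SSet.S.ext_iff x y).1 h]
  · intro h
    obtain rfl : n = m := by
      simpa [ncard_range_nerve_obj hx, ncard_range_nerve_obj hy] using congrArg Set.ncard h
    rw [nerve.ext_of_isThin ((hx.range_inj hy).1 h)]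

lemma range_nerve_obj_subset_of_le {x y : (nerve X).S} (h : x ≤ y) :
    Set.range x.simplex.obj ⊆ Set.range y.simplex.obj := by
  obtain ⟨f, hf⟩ := SSet.S.le_iff.1 h
  rintro _ ⟨i, rfl⟩
  rw [← hf]
  exact ⟨f.toOrderHom i, rfl⟩

lemma range_nerve_δ_obj {n : ℕ} {x : (nerve X) _⦋n + 1⦌} (hx : Function.Injective x.obj)
    (j : Fin (n + 2)) :
    Set.range ((nerve X).δ j x).obj = Set.range x.obj \ {x.obj j} := by
  change Set.range (x.obj ∘ j.succAbove) = _
  rw [Set.range_comp, Fin.range_succAbove, Set.compl_eq_univ_sdiff, Set.image_sdiff hx,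
    Set.image_univ, Set.image_singleton]

end PartialOrder

end

section Pivot

variable {S : Type*} [PartialOrder S] {x₀ x₁ x₂ : S}

open Classical in
noncomputable def pivot (x₀ x₂ : S) (C : Set S) : S := if ∃ a ∈ C, a < x₀ then x₀ else x₂

lemma pivot_eq_or (C : Set S) : pivot x₀ x₂ C = x₀ ∨ pivot x₀ x₂ C = x₂ := by
  unfold pivot; split_ifs <;> simp

lemma pivot_mem (C : Set S) : pivot x₀ x₂ C ∈ ({x₀, x₁, x₂} : Set S) := by
  rcases pivot_eq_or (x₀ := x₀) (x₂ := x₂) C with h | h <;> simp [h]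

lemma pivot_congr {C D : Set S} (h : ∀ a < x₀, a ∈ C ↔ a ∈ D) :
    pivot x₀ x₂ C = pivot x₀ x₂ D := by
  unfold pivot
  congr 1
  exact propext ⟨fun ⟨a, ha, hlt⟩ => ⟨a, (h a hlt).1 ha, hlt⟩,
    fun ⟨a, ha, hlt⟩ => ⟨a, (h a hlt).2 ha, hlt⟩⟩

lemma pivot_insert_of_not_lt {C : Set S} {b : S} (hb : ¬ b < x₀) :
    pivot x₀ x₂ (insert b C) = pivot x₀ x₂ C :=
  pivot_congr fun a ha => by simp [show a ≠ b by rintro rfl; exact hb ha]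

lemma pivot_diff_singleton_of_not_lt {C : Set S} {b : S} (hb : ¬ b < x₀) :
    pivot x₀ x₂ (C \ {b}) = pivot x₀ x₂ C :=
  pivot_congr fun a ha => by simp [show a ≠ b by rintro rfl; exact hb ha]

end Pivot

structure Neighbors {S : Type*} [PartialOrder S] (x₀ x₁ x₂ : S) : Prop where
  lt₀₁ : x₀ < x₁
  lt₁₂ : x₁ < x₂
  le_left ⦃r : S⦄ : r ≠ x₁ → r ≤ x₁ → r ≤ x₀
  le_right ⦃r : S⦄ : r ≠ x₁ → x₁ ≤ r → x₂ ≤ r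

namespace Neighbors

variable {S : Type*} [PartialOrder S] {x₀ x₁ x₂ : S}

lemma not_pivot_lt (hb : Neighbors x₀ x₁ x₂) (C : Set S) : ¬ pivot x₀ x₂ C < x₀ := by
  rcases pivot_eq_or (x₀ := x₀) (x₂ := x₂) C with h | h <;> rw [h]
  · exact lt_irrefl _
  · exact (hb.lt₀₁.trans hb.lt₁₂).not_gt

lemma pivot_ne (hb : Neighbors x₀ x₁ x₂) (C : Set S) : pivot x₀ x₂ C ≠ x₁ := by
  rcases pivot_eq_or (x₀ := x₀) (x₂ := x₂) C with h | h <;> rw [h]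
  · exact hb.lt₀₁.ne
  · exact hb.lt₁₂.ne'

lemma pivot_insert_pivot (hb : Neighbors x₀ x₁ x₂) (C : Set S) :
    pivot x₀ x₂ (insert (pivot x₀ x₂ C) C) = pivot x₀ x₂ C :=
  pivot_insert_of_not_lt (hb.not_pivot_lt C)

lemma pivot_diff_pivot (hb : Neighbors x₀ x₁ x₂) (C : Set S) :
    pivot x₀ x₂ (C \ {pivot x₀ x₂ C}) = pivot x₀ x₂ C :=
  pivot_diff_singleton_of_not_lt (hb.not_pivot_lt C)

lemma pivot_eq_left_of_subset (hb : Neighbors x₀ x₁ x₂) {C D : Set S} (hCD : C ⊆ D)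
    (h : pivot x₀ x₂ C = x₀) : pivot x₀ x₂ D = x₀ := by
  unfold pivot at h ⊢
  by_cases hC : ∃ a ∈ C, a < x₀
  · obtain ⟨a, ha, hlt⟩ := hC
    rw [if_pos ⟨a, hCD ha, hlt⟩]
  · rw [if_neg hC] at h
    exact absurd h (hb.lt₀₁.trans hb.lt₁₂).ne'

lemma le_or_le (hb : Neighbors x₀ x₁ x₂) {C : Set S} (hC : IsChain (· ≤ ·) C) (hx₁ : x₁ ∈ C)
    {c : S} (hc : c ∈ C) (hne : c ≠ x₁) : c ≤ x₀ ∨ x₂ ≤ c :=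
  (hC.total hc hx₁).imp (hb.le_left hne) (hb.le_right hne)

lemma lt_pivot_or_pivot_lt (hb : Neighbors x₀ x₁ x₂) {C : Set S} (hC : IsChain (· ≤ ·) C)
    (hx₁ : x₁ ∈ C) {c : S} (hc : c ∈ C) (hne : c ≠ pivot x₀ x₂ C) :
    c < pivot x₀ x₂ C ∨ pivot x₀ x₂ C < c := by
  suffices c ≤ pivot x₀ x₂ C ∨ pivot x₀ x₂ C ≤ c from
    this.imp (lt_of_le_of_ne · hne) (lt_of_le_of_ne · hne.symm)
  have h02 := hb.lt₀₁.le.trans hb.lt₁₂.le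
  rcases eq_or_ne c x₁ with rfl | hc₁
  · rcases pivot_eq_or (x₀ := x₀) (x₂ := x₂) C with h | h <;> rw [h]
    exacts [Or.inr hb.lt₀₁.le, Or.inl hb.lt₁₂.le]
  · rcases pivot_eq_or (x₀ := x₀) (x₂ := x₂) C with h | h <;> rw [h] <;>
      rcases hb.le_or_le hC hx₁ hc hc₁ with h' | h'
    exacts [Or.inl h', Or.inr (h02.trans h'), Or.inl (h'.trans h02), Or.inr h']

lemma exists_lt_pivot (hb : Neighbors x₀ x₁ x₂) {C : Set S} (hx₁ : x₁ ∈ C) :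
    ∃ c ∈ C, c < pivot x₀ x₂ C := by
  unfold pivot
  split_ifs with h
  · exact h
  · exact ⟨x₁, hx₁, hb.lt₁₂⟩

lemma exists_pivot_lt (hb : Neighbors x₀ x₁ x₂) {C : Set S} (hC : IsChain (· ≤ ·) C)
    (hx₁ : x₁ ∈ C) (hQ : ¬ C ⊆ {x₀, x₁, x₂}) : ∃ c ∈ C, pivot x₀ x₂ C < c := by
  unfold pivot
  split_ifs with h
  · exact ⟨x₁, hx₁, hb.lt₀₁⟩
  · obtain ⟨u, hu, huQ⟩ := Set.not_subset.1 hQ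
    simp only [Set.mem_insert_iff, Set.mem_singleton_iff, not_or] at huQ
    refine ⟨u, hu, ?_⟩
    rcases hb.le_or_le hC hx₁ hu huQ.2.1 with h' | h'
    · exact absurd ⟨u, hu, lt_of_le_of_ne h' huQ.1⟩ h
    · exact lt_of_le_of_ne h' (Ne.symm huQ.2.2)

end Neighbors

section Pairing

open PartialOrder Simplicial

variable {S : Type*} [PartialOrder S] {x₀ x₁ x₂ : S}

lemma notMem_nerveUnion_iff {n : ℕ} (x : (nerve S) _⦋n⦌) :
    x ∉ (nerveUnion S {({x₀, x₁, x₂} : Set S), {r | r ≠ x₁}}).obj _ ↔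
      x₁ ∈ Set.range x.obj ∧ ¬ Set.range x.obj ⊆ {x₀, x₁, x₂} := by
  simp [nerveUnion, Set.range_subset_iff, and_comm]

/-- The type (II) simplices of the pairing; the type (I) partner of `s` is `hb.cone s`. -/
structure MissingPivot (x₀ x₁ x₂ : S) where
  dim : ℕ
  simplex : (nerve S) _⦋dim⦌
  strictMono : StrictMono simplex.obj
  x₁_mem : x₁ ∈ Set.range simplex.obj
  not_subset : ¬ Set.range simplex.obj ⊆ {x₀, x₁, x₂}
  pivot_notMem : pivot x₀ x₂ (Set.range simplex.obj) ∉ Set.range simplex.obj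

lemma MissingPivot.ext_of_range_eq {s t : MissingPivot x₀ x₁ x₂}
    (h : Set.range s.simplex.obj = Set.range t.simplex.obj) : s = t := by
  have h' := (nerve_sMk_eq_iff s.strictMono t.strictMono).2 h
  cases s; cases t
  obtain rfl := SSet.S.dim_eq_of_mk_eq h'
  obtain rfl := (SSet.S.ext_iff _ _).1 h'
  rfl

namespace Neighbors

lemma exists_strictMono_insertNth_pivot (hb : Neighbors x₀ x₁ x₂) (s : MissingPivot x₀ x₁ x₂) :
    ∃ q : Fin (s.dim + 2),
      StrictMono (q.insertNth (pivot x₀ x₂ (Set.range s.simplex.obj)) s.simplex.obj) :=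
  Fin.exists_strictMono_insertNth s.strictMono fun i =>
    hb.lt_pivot_or_pivot_lt s.simplex.monotone.isChain_range s.x₁_mem ⟨i, rfl⟩
      fun h => s.pivot_notMem (h ▸ ⟨i, rfl⟩)

noncomputable def pivotPos (hb : Neighbors x₀ x₁ x₂) (s : MissingPivot x₀ x₁ x₂) :
    Fin (s.dim + 2) :=
  (hb.exists_strictMono_insertNth_pivot s).choose

lemma strictMono_insertNth_pivotPos (hb : Neighbors x₀ x₁ x₂) (s : MissingPivot x₀ x₁ x₂) :
    StrictMono ((hb.pivotPos s).insertNth (pivot x₀ x₂ (Set.range s.simplex.obj))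
      s.simplex.obj) :=
  (hb.exists_strictMono_insertNth_pivot s).choose_spec

noncomputable def cone (hb : Neighbors x₀ x₁ x₂) (s : MissingPivot x₀ x₁ x₂) :
    (nerve S) _⦋s.dim + 1⦌ :=
  (hb.strictMono_insertNth_pivotPos s).monotone.functor

lemma strictMono_cone (hb : Neighbors x₀ x₁ x₂) (s : MissingPivot x₀ x₁ x₂) :
    StrictMono (hb.cone s).obj :=
  hb.strictMono_insertNth_pivotPos s

lemma range_cone (hb : Neighbors x₀ x₁ x₂) (s : MissingPivot x₀ x₁ x₂) :
    Set.range (hb.cone s).obj =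
      insert (pivot x₀ x₂ (Set.range s.simplex.obj)) (Set.range s.simplex.obj) :=
  Fin.range_insertNth _ _ _

lemma δ_pivotPos_cone (hb : Neighbors x₀ x₁ x₂) (s : MissingPivot x₀ x₁ x₂) :
    (nerve S).δ (hb.pivotPos s) (hb.cone s) = s.simplex :=
  nerve.ext_of_isThin <| funext fun i => (nerve.δ_obj _ _ i).trans
    (Fin.insertNth_apply_succAbove (α := fun _ => S) _ _ s.simplex.obj i)

lemma pivot_range_cone (hb : Neighbors x₀ x₁ x₂) (s : MissingPivot x₀ x₁ x₂) :
    pivot x₀ x₂ (Set.range (hb.cone s).obj) = pivot x₀ x₂ (Set.range s.simplex.obj) := by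
  rw [range_cone, hb.pivot_insert_pivot]

lemma pivotPos_ne_zero (hb : Neighbors x₀ x₁ x₂) (s : MissingPivot x₀ x₁ x₂) :
    hb.pivotPos s ≠ 0 := by
  obtain ⟨_, ⟨i, rfl⟩, hi⟩ := hb.exists_lt_pivot s.x₁_mem
  exact Fin.ne_zero_of_lt
    (Fin.castSucc_lt_of_strictMono_insertNth (hb.strictMono_insertNth_pivotPos s) hi)

lemma pivotPos_ne_last (hb : Neighbors x₀ x₁ x₂) (s : MissingPivot x₀ x₁ x₂) :
    hb.pivotPos s ≠ Fin.last _ := by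
  obtain ⟨_, ⟨i, rfl⟩, hi⟩ :=
    hb.exists_pivot_lt s.simplex.monotone.isChain_range s.x₁_mem s.not_subset
  exact Fin.ne_last_of_lt ((Fin.le_castSucc_of_strictMono_insertNth
    (hb.strictMono_insertNth_pivotPos s) hi).trans_lt (Fin.castSucc_lt_last i))

lemma eq_of_range_cone_eq (hb : Neighbors x₀ x₁ x₂) {s t : MissingPivot x₀ x₁ x₂}
    (h : Set.range (hb.cone s).obj = Set.range (hb.cone t).obj) : s = t := by
  have hp := hb.pivot_range_cone s
  rw [h, hb.pivot_range_cone] at hp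
  apply MissingPivot.ext_of_range_eq
  rw [← Set.insert_sdiff_self_of_notMem s.pivot_notMem,
    ← Set.insert_sdiff_self_of_notMem t.pivot_notMem, ← hb.range_cone, ← hb.range_cone, h, hp]

lemma range_cone_ne (hb : Neighbors x₀ x₁ x₂) (s t : MissingPivot x₀ x₁ x₂) :
    Set.range (hb.cone s).obj ≠ Set.range t.simplex.obj := fun h => by
  apply t.pivot_notMem
  rw [← h, hb.pivot_range_cone, hb.range_cone]
  exact Set.mem_insert _ _

lemma exists_sMk_eq_cone (hb : Neighbors x₀ x₁ x₂) {m : ℕ} {y : (nerve S) _⦋m⦌}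
    (hy : StrictMono y.obj) (hx₁ : x₁ ∈ Set.range y.obj)
    (hQ : ¬ Set.range y.obj ⊆ {x₀, x₁, x₂})
    (hp : pivot x₀ x₂ (Set.range y.obj) ∈ Set.range y.obj) :
    ∃ s : MissingPivot x₀ x₁ x₂, SSet.S.mk y = SSet.S.mk (hb.cone s) := by
  obtain ⟨j, hj⟩ := hp
  obtain _ | n := m
  · refine absurd (fun _ ⟨i, hi⟩ => ?_) hQ
    obtain ⟨k, hk⟩ := hx₁
    rw [← hi, Subsingleton.elim (α := Fin 1) i k, hk]
    exact Set.mem_insert_of_mem _ (Set.mem_insert _ _)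
  have hrange := range_nerve_δ_obj hy.injective j
  rw [hj] at hrange
  have hpivot : pivot x₀ x₂ (Set.range ((nerve S).δ j y).obj) = pivot x₀ x₂ (Set.range y.obj) := by
    rw [hrange, hb.pivot_diff_pivot]
  let s : MissingPivot x₀ x₁ x₂ :=
    { dim := n
      simplex := (nerve S).δ j y
      strictMono := hy.comp (Fin.strictMono_succAbove j)
      x₁_mem := by rw [hrange]; exact ⟨hx₁, (hb.pivot_ne _).symm⟩
      not_subset := fun h => hQ <| by
        rw [hrange, Set.sdiff_subset_iff] at h
        exact h.trans (Set.union_subset (Set.singleton_subset_iff.2 (pivot_mem _)) le_rfl)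
      pivot_notMem := by rw [hpivot, hrange]; exact fun h => h.2 rfl }
  refine ⟨s, (nerve_sMk_eq_iff hy (hb.strictMono_cone s)).2 ?_⟩
  rw [hb.range_cone, hpivot, hrange, Set.insert_sdiff_singleton]
  exact (Set.insert_eq_of_mem (Set.mem_range.2 ⟨j, hj⟩)).symm

lemma pivot_eq_of_range_subset_cone (hb : Neighbors x₀ x₁ x₂) {s t : MissingPivot x₀ x₁ x₂}
    (hne : s ≠ t) (hdim : s.dim = t.dim)
    (hsub : Set.range s.simplex.obj ⊆ Set.range (hb.cone t).obj) :
    pivot x₀ x₂ (Set.range s.simplex.obj) = x₂ ∧ pivot x₀ x₂ (Set.range t.simplex.obj) = x₀ := by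
  have hpt : pivot x₀ x₂ (Set.range t.simplex.obj) ∈ Set.range s.simplex.obj := by
    by_contra h
    refine hne (MissingPivot.ext_of_range_eq (Set.eq_of_subset_of_ncard_le (fun a ha => ?_) ?_
      (Set.finite_range _)))
    · rw [hb.range_cone] at hsub
      exact (hsub ha).resolve_left (by rintro rfl; exact h ha)
    · rw [ncard_range_nerve_obj t.strictMono, ncard_range_nerve_obj s.strictMono, hdim]
  have hst : pivot x₀ x₂ (Set.range s.simplex.obj) ≠ pivot x₀ x₂ (Set.range t.simplex.obj) :=
    fun h => s.pivot_notMem (h ▸ hpt)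
  have hs : pivot x₀ x₂ (Set.range s.simplex.obj) ≠ x₀ := fun h =>
    hst (h.trans (hb.pivot_range_cone t ▸ hb.pivot_eq_left_of_subset hsub h).symm)
  have hs₂ := (pivot_eq_or _).resolve_left hs
  exact ⟨hs₂, (pivot_eq_or _).resolve_right fun h => hst (hs₂.trans h.symm)⟩

noncomputable def pairingCore (hb : Neighbors x₀ x₁ x₂) :
    SSet.Subcomplex.PairingCore (nerveUnion S {({x₀, x₁, x₂} : Set S), {r | r ≠ x₁}}) where
  ι := MissingPivot x₀ x₁ x₂
  dim s := s.dim
  simplex := hb.cone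
  index := hb.pivotPos
  nonDegenerate₁ s := (mem_nerve_nonDegenerate_iff_strictMono _).2 (hb.strictMono_cone s)
  nonDegenerate₂ s := by
    rw [hb.δ_pivotPos_cone]
    exact (mem_nerve_nonDegenerate_iff_strictMono _).2 s.strictMono
  notMem₁ s := by
    have hsub := hb.range_cone s ▸ Set.subset_insert _ _
    exact (notMem_nerveUnion_iff _).2 ⟨hsub s.x₁_mem, fun h => s.not_subset (hsub.trans h)⟩
  notMem₂ s := by
    rw [hb.δ_pivotPos_cone]
    exact (notMem_nerveUnion_iff _).2 ⟨s.x₁_mem, s.not_subset⟩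
  injective_type₁' h := hb.eq_of_range_cone_eq
    ((nerve_sMk_eq_iff (hb.strictMono_cone _) (hb.strictMono_cone _)).1 h)
  injective_type₂' h := by
    rw [hb.δ_pivotPos_cone, hb.δ_pivotPos_cone] at h
    exact MissingPivot.ext_of_range_eq ((nerve_sMk_eq_iff (MissingPivot.strictMono _)
      (MissingPivot.strictMono _)).1 h)
  type₁_ne_type₂' s t h := by
    rw [hb.δ_pivotPos_cone] at h
    exact hb.range_cone_ne s t ((nerve_sMk_eq_iff (hb.strictMono_cone _) t.strictMono).1 h)
  surjective' x := by
    obtain ⟨m, y, hy, hyA, rfl⟩ := x.mk_surjective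
    rw [mem_nerve_nonDegenerate_iff_strictMono] at hy
    obtain ⟨hx₁, hQ⟩ := (notMem_nerveUnion_iff y).1 hyA
    by_cases hp : pivot x₀ x₂ (Set.range y.obj) ∈ Set.range y.obj
    · obtain ⟨s, hs⟩ := hb.exists_sMk_eq_cone hy hx₁ hQ hp
      exact ⟨s, Or.inl hs⟩
    · refine ⟨⟨m, y, hy, hx₁, hQ, hp⟩, Or.inr ?_⟩
      rw [hb.δ_pivotPos_cone]
      rfl

lemma pivot_eq_of_ancestralRel (hb : Neighbors x₀ x₁ x₂) {s t : MissingPivot x₀ x₁ x₂}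
    (hst : hb.pairingCore.AncestralRel s t) (hdim : s.dim = t.dim) :
    pivot x₀ x₂ (Set.range s.simplex.obj) = x₂ ∧ pivot x₀ x₂ (Set.range t.simplex.obj) = x₀ := by
  have hsub := range_nerve_obj_subset_of_le hst.2.le
  change Set.range ((nerve S).δ (hb.pivotPos s) (hb.cone s)).obj ⊆
    Set.range (hb.cone t).obj at hsub
  rw [hb.δ_pivotPos_cone] at hsub
  exact hb.pivot_eq_of_range_subset_cone hst.1 hdim hsub

instance (hb : Neighbors x₀ x₁ x₂) : hb.pairingCore.IsInner where
  ne_zero := hb.pivotPos_ne_zero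
  ne_last := hb.pivotPos_ne_last

open Classical in
instance (hb : Neighbors x₀ x₁ x₂) : hb.pairingCore.IsRegular :=
  SSet.Subcomplex.PairingCore.WeakRankFunction.isRegular (α := ℕ)
    { rank s := if pivot x₀ x₂ (Set.range s.simplex.obj) = x₀ then 1 else 0
      lt {s t} hst hdim := by
        obtain ⟨hs, ht⟩ := hb.pivot_eq_of_ancestralRel hst hdim
        simp [hs, ht, (hb.lt₀₁.trans hb.lt₁₂).ne'] }

end Neighbors

end Pairing

lemma innerAnodyneExtensions_le_innerAnodyne :
    SSet.innerAnodyneExtensions ≤ InnerAnodyne := by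
  intro A B i hi X Y p hp
  refine hi p fun _ _ j hj => ?_
  induction hj with
  | intro k h0 hn => exact hp _ ⟨_, k, h0, hn, ⟨Iso.refl _⟩⟩

/-- Let `S` be a poset containing a three-element chain `x₀ < x₁ < x₂` (a full
subposet `Q`), and let `R = S − {x₁}`.  If `x₀` is the greatest element of
`{r ∈ R : r ≤ x₁}` and `x₂` is the least element of `{r ∈ R : x₁ ≤ r}`, then the
inclusion `N(Q) ∪ N(R) ⊆ N(S)` is inner anodyne. -/
theorem stmt14 (S : Type) [PartialOrder S] (x₀ x₁ x₂ : S)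
    (h01 : x₀ < x₁) (h12 : x₁ < x₂)
    (hgreatest : IsGreatest {r : S | r ≠ x₁ ∧ r ≤ x₁} x₀)
    (hleast : IsLeast {r : S | r ≠ x₁ ∧ x₁ ≤ r} x₂) :
    InnerAnodyne (nerveUnion S {({x₀, x₁, x₂} : Set S), {r : S | r ≠ x₁}}).ι := by
  have hb : Neighbors x₀ x₁ x₂ :=
    ⟨h01, h12, fun _ hr hle => hgreatest.2 ⟨hr, hle⟩, fun _ hr hle => hleast.2 ⟨hr, hle⟩⟩
  exact innerAnodyneExtensions_le_innerAnodyne _ hb.pairingCore.pairing.innerAnodyneExtensions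
end

section
/- For n ≥ 0, the nonempty up-sets of [n] × [n] are covered by the intervals between ξ^n(p,n) and ς^n(p,n): Crt^n = ⋃_{p=0}^n Crt^n_{ξ^n(p,n) // ς^n(p,n)}, where ς^n(p,q) is the principal up-set at (p,q) and ξ^n(p,q) = ς^n(p,0) ∪ ς^n(0,q). Concretely, every nonempty up-set x of [n] × [n] satisfies ς^n(p,n) ⊆ x ⊆ ξ^n(p,n) for p = min{a : (a,b) ∈ x}. -/
/-- Every nonempty up-set `x` of `[n] × [n]` lies in the interval between
`ξ^n(p,n) = ς^n(p,0) ∪ ς^n(0,n)` and `ς^n(p,n)` for `p = min {a | ∃ b, (a,b) ∈ x}`: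
that is, `ς^n(p,n) ⊆ x ⊆ ς^n(p,0) ∪ ς^n(0,n)`.  Hence `Crt^n` is covered by these
intervals. -/
theorem stmt18 (n : ℕ)
    (x : UpperSet (Fin (n + 1) × Fin (n + 1)))
    (hx : (x : Set (Fin (n + 1) × Fin (n + 1))).Nonempty) :
    ∃ p : Fin (n + 1),
      IsLeast {a : Fin (n + 1) | ∃ b, (a, b) ∈ (x : Set (Fin (n + 1) × Fin (n + 1)))} p ∧
      (UpperSet.Ici (p, Fin.last n) : Set (Fin (n + 1) × Fin (n + 1))) ⊆
        (x : Set (Fin (n + 1) × Fin (n + 1))) ∧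
      (x : Set (Fin (n + 1) × Fin (n + 1))) ⊆
        (UpperSet.Ici (p, (0 : Fin (n + 1))) : Set (Fin (n + 1) × Fin (n + 1))) ∪
        (UpperSet.Ici ((0 : Fin (n + 1)), Fin.last n) : Set (Fin (n + 1) × Fin (n + 1))) := by
  set S : Set (Fin (n + 1)) :=
    {a : Fin (n + 1) | ∃ b, (a, b) ∈ (x : Set (Fin (n + 1) × Fin (n + 1)))} with hS
  have hSne : S.Nonempty := by
    obtain ⟨⟨a, b⟩, hab⟩ := hx
    exact ⟨a, b, hab⟩
  obtain ⟨p, hp, hpmin⟩ := (wellFounded_lt (α := Fin (n + 1))).has_min S hSne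
  have hleast : IsLeast S p := ⟨hp, fun a ha => not_lt.mp (hpmin a ha)⟩
  obtain ⟨b0, hb0⟩ := hp
  refine ⟨p, hleast, ?_, ?_⟩
  · rintro ⟨a, b⟩ hab
    simp only [UpperSet.coe_Ici, Set.mem_Ici, Prod.mk_le_mk] at hab
    have : (p, b0) ≤ (a, b) :=
      ⟨hab.1, le_trans (Fin.le_last b0) hab.2⟩
    exact x.upper this hb0
  · rintro ⟨a, b⟩ hab
    left
    simp only [UpperSet.coe_Ici, Set.mem_Ici, Prod.mk_le_mk]
    exact ⟨hleast.2 ⟨b, hab⟩, Fin.zero_le b⟩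
end
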